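/- arXiv:2410.10485 — 2 statements merged into one kernel-verified Lean document; each statement's English description precedes it below -/
import Mathlib

section
/- For every integer k with 2 ≤ k ≤ n, the following are equivalent: (i) u_j(X) = 0 for every j with 1 ≤ j < k; (ii) for every subset a ⊆ {1,…,n} with |a| ≤ k, the random variables (X_i)_{i∈a} are jointly independent. -/
open MeasureTheory Finset

noncomputable section

variable {Ω : Type*} [MeasurableSpace Ω]

/-- Shannon entropy of a finite-valued random variable `Z` under the measure `μ`
(with the convention that the entropy of an empty tuple is `negMulLog (μ univ) = 0`
for a probability measure). -/
def ent {α : Type*} [Fintype α] (μ : Measure Ω) (Z : Ω → α) : ℝ :=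
  ∑ z : α, Real.negMulLog ((μ (Z ⁻¹' {z})).toReal)

/-- Conditional entropy `H(A | B)`. -/
def condEnt {α β : Type*} [Fintype α] [Fintype β] (μ : Measure Ω)
    (A : Ω → α) (B : Ω → β) : ℝ :=
  ent μ (fun ω => (A ω, B ω)) - ent μ B

/-- Mutual information `I(A ; B)`. -/
def mi {α β : Type*} [Fintype α] [Fintype β] (μ : Measure Ω)
    (A : Ω → α) (B : Ω → β) : ℝ :=
  ent μ A + ent μ B - ent μ (fun ω => (A ω, B ω))

/-- Conditional mutual information `I(A ; B | C)`. -/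
def cmi {α β γ : Type*} [Fintype α] [Fintype β] [Fintype γ] (μ : Measure Ω)
    (A : Ω → α) (B : Ω → β) (C : Ω → γ) : ℝ :=
  ent μ (fun ω => (A ω, C ω)) + ent μ (fun ω => (B ω, C ω))
    - ent μ (fun ω => (A ω, B ω, C ω)) - ent μ C

/-- The sub-tuple `X^a = (X_i)_{i ∈ a}` of the random vector `X = (X_1, …, X_n)`. -/
def restr {n : ℕ} {S : Type*} (X : Fin n → Ω → S) (a : Finset (Fin n)) :
    Ω → (a → S) :=
  fun ω i => X i.1 ω

/-- Average subset entropy `r_k(X) = C(n,k)⁻¹ ∑_{|a| = k} H(X^a)`. -/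
def rE {n : ℕ} {S : Type*} [Fintype S] (μ : Measure Ω) (X : Fin n → Ω → S) (k : ℕ) : ℝ :=
  ((n.choose k : ℝ))⁻¹ *
    ∑ a ∈ univ.powerset.filter (fun a : Finset (Fin n) => a.card = k), ent μ (restr X a)

/-- Average conditional pairwise mutual information
`u_k(X) = (C(n,k+1) C(k+1,2))⁻¹ ∑_{i<j} ∑_{|a| = k-1, i,j ∉ a} I(X_i ; X_j | X^a)`. -/
def uI {n : ℕ} {S : Type*} [Fintype S] (μ : Measure Ω) (X : Fin n → Ω → S) (k : ℕ) : ℝ :=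
  ((n.choose (k + 1) : ℝ) * ((k + 1).choose 2 : ℝ))⁻¹ *
    ∑ p ∈ univ.filter (fun p : Fin n × Fin n => p.1 < p.2),
      ∑ a ∈ (univ \ ({p.1, p.2} : Finset (Fin n))).powerset.filter
          (fun a : Finset (Fin n) => a.card = k - 1),
        cmi μ (X p.1) (X p.2) (restr X a)

/-!
`I(A ; B | C)` is the Kullback–Leibler divergence of the law `p(x, y, z)` of `(A, B, C)` from
`p(x, z) p(y, z) / p(z)`, so by Gibbs' inequality it is nonnegative and vanishes exactly when
`p(x, y, z) p(z) = p(x, z) p(y, z)`. Hence `u_j(X) = 0` iff every term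
`I(X_i ; X_j | X^a)` with `|a| = j - 1` vanishes.

If these terms vanish for all `|a| ≤ k - 2`, the product formula for the mass function of `X^b`
spreads by induction on `|b| ≤ k`: writing `b = a ∪ {i, j}`, the identity
`p_b p_a = p_{a ∪ {i}} p_{a ∪ {j}}` and the product formulas for the three smaller sets give the
one for `b` (where `p_a = 0`, also `p_b = 0`). Conversely, entropy is additive over jointly
independent families, and `I(X_i ; X_j | X^a) = H(X^{a+i}) + H(X^{a+j}) - H(X^{a+i+j}) - H(X^a)`
then cancels to `0`.
-/

open Real ProbabilityTheory Function InformationTheory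

section Mass

variable {α β : Type*} (μ : Measure Ω)

def pmass (Z : Ω → α) (z : α) : ℝ := (μ (Z ⁻¹' {z})).toReal

lemma pmass_nonneg (Z : Ω → α) (z : α) : 0 ≤ pmass μ Z z := ENNReal.toReal_nonneg

lemma pmass_eq_of_injective {f : α → β} (hf : Injective f) (Z : Ω → α) {W : Ω → β}
    (hW : ∀ ω, W ω = f (Z ω)) (z : α) : pmass μ W (f z) = pmass μ Z z := by
  obtain rfl : W = f ∘ Z := funext hW
  rw [pmass, Set.preimage_comp, ← Set.image_singleton, hf.preimage_image, pmass]

lemma pmass_le_pmass_comp [IsFiniteMeasure μ] (f : α → β) (Z : Ω → α) (z : α) :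
    pmass μ Z z ≤ pmass μ (f ∘ Z) (f z) :=
  ENNReal.toReal_mono (measure_ne_top μ _) (measure_mono fun _ h => congrArg f h)

lemma ent_eq_neg_sum [Fintype α] (Z : Ω → α) :
    ent μ Z = -∑ z, pmass μ Z z * log (pmass μ Z z) := by
  simp only [ent, ← sum_neg_distrib, negMulLog, neg_mul, pmass]

variable [MeasurableSpace α] [MeasurableSingletonClass α] [Fintype α] [IsFiniteMeasure μ]
  {Z : Ω → α}

lemma sum_pmass_fiber (hZ : Measurable Z) [DecidableEq β] (f : α → β) (s : β) :
    ∑ t with f t = s, pmass μ Z t = pmass μ (f ∘ Z) s := by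
  simp only [pmass]
  rw [← ENNReal.toReal_sum fun _ _ => measure_ne_top μ _,
    sum_measure_preimage_singleton _ fun t _ => hZ (measurableSet_singleton t)]
  congr 2
  ext ω
  simp

lemma sum_pmass [IsProbabilityMeasure μ] (hZ : Measurable Z) : ∑ t, pmass μ Z t = 1 := by
  simp only [pmass]
  rw [← ENNReal.toReal_sum fun _ _ => measure_ne_top μ _,
    sum_measure_preimage_singleton _ fun t _ => hZ (measurableSet_singleton t)]
  simp

lemma sum_pmass_mul_comp (hZ : Measurable Z) [Fintype β] (f : α → β) (g : β → ℝ) :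
    ∑ t, pmass μ Z t * g (f t) = ∑ s, pmass μ (f ∘ Z) s * g s := by
  classical
  rw [← sum_fiberwise univ f]
  refine sum_congr rfl fun s _ => ?_
  rw [← sum_pmass_fiber μ hZ f s, sum_mul]
  exact sum_congr rfl fun t ht => by rw [(mem_filter.1 ht).2]

lemma ent_comp_eq_neg_sum (hZ : Measurable Z) [Fintype β] (f : α → β) :
    ent μ (f ∘ Z) = -∑ t, pmass μ Z t * log (pmass μ (f ∘ Z) (f t)) := by
  rw [ent_eq_neg_sum, sum_pmass_mul_comp μ hZ f fun s => log (pmass μ (f ∘ Z) s)]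

lemma ent_eq_of_injective (hZ : Measurable Z) [Fintype β] {f : α → β} (hf : Injective f)
    {W : Ω → β} (hW : ∀ ω, W ω = f (Z ω)) : ent μ W = ent μ Z := by
  obtain rfl : W = f ∘ Z := funext hW
  simp only [ent_comp_eq_neg_sum μ hZ, pmass_eq_of_injective μ hf Z (W := f ∘ Z) fun _ => rfl,
    ent_eq_neg_sum]

lemma sum_pmass_pair_left {γ : Type*} [MeasurableSpace γ] [MeasurableSingletonClass γ]
    [Fintype γ] {C : Ω → γ} (hZ : Measurable Z) (hC : Measurable C) (z : γ) :
    ∑ x, pmass μ (fun ω => (Z ω, C ω)) (x, z) = pmass μ C z := by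
  classical
  change _ = pmass μ (Prod.snd ∘ fun ω => (Z ω, C ω)) z
  rw [← sum_pmass_fiber μ (hZ.prodMk hC) Prod.snd z, sum_filter, Fintype.sum_prod_type]
  exact sum_congr rfl fun x _ => by simp

end Mass

section Gibbs

lemma mul_log_div_sub_eq_mul_klFun {p q : ℝ} (hq : q ≠ 0) :
    p * log (p / q) - (p - q) = q * klFun (p / q) := by
  rw [klFun_apply]
  field_simp
  ring

lemma sub_le_mul_log_div {p q : ℝ} (hp : 0 ≤ p) (hq : 0 ≤ q) (hpq : q = 0 → p = 0) :
    p - q ≤ p * log (p / q) := by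
  rcases hq.eq_or_lt with rfl | hq
  · simp [hpq rfl]
  · have := mul_nonneg hq.le (klFun_nonneg (div_nonneg hp hq.le))
    linarith [mul_log_div_sub_eq_mul_klFun (p := p) hq.ne']

lemma eq_of_mul_log_div_eq_sub {p q : ℝ} (hp : 0 ≤ p) (hq : 0 ≤ q) (hpq : q = 0 → p = 0)
    (h : p * log (p / q) = p - q) : p = q := by
  rcases hq.eq_or_lt with rfl | hq
  · exact hpq rfl
  · have hkl : q * klFun (p / q) = 0 := by
      rw [← mul_log_div_sub_eq_mul_klFun hq.ne', h, sub_self]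
    rw [mul_eq_zero, klFun_eq_zero_iff (div_nonneg hp hq.le), div_eq_one_iff_eq hq.ne'] at hkl
    exact hkl.resolve_left hq.ne'

variable {ι : Type*} [Fintype ι] {p q : ι → ℝ}

lemma sum_mul_log_div_nonneg (hp : ∀ t, 0 ≤ p t) (hq : ∀ t, 0 ≤ q t)
    (hpq : ∀ t, q t = 0 → p t = 0) (hsp : ∑ t, p t = 1) (hsq : ∑ t, q t ≤ 1) :
    0 ≤ ∑ t, p t * log (p t / q t) := by
  have := sum_le_sum fun t (_ : t ∈ univ) => sub_le_mul_log_div (hp t) (hq t) (hpq t)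
  rw [sum_sub_distrib, hsp] at this
  linarith

lemma eq_of_sum_mul_log_div_eq_zero (hp : ∀ t, 0 ≤ p t) (hq : ∀ t, 0 ≤ q t)
    (hpq : ∀ t, q t = 0 → p t = 0) (hsp : ∑ t, p t = 1) (hsq : ∑ t, q t ≤ 1)
    (h : ∑ t, p t * log (p t / q t) = 0) : p = q := by
  have hle : ∀ t ∈ univ, p t - q t ≤ p t * log (p t / q t) := fun t _ =>
    sub_le_mul_log_div (hp t) (hq t) (hpq t)
  have heq : ∑ t, (p t - q t) = ∑ t, p t * log (p t / q t) := by
    refine le_antisymm (sum_le_sum hle) ?_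
    rw [sum_sub_distrib, hsp, h]
    linarith
  funext t
  exact eq_of_mul_log_div_eq_sub (hp t) (hq t) (hpq t)
    ((sum_eq_sum_iff_of_le hle).1 heq t (mem_univ t)).symm

end Gibbs

section CondMutualInfo

variable {α β γ : Type*}

/-- The mass function `p(x, z) p(y, z) / p(z)` of the law under which `A` and `B` are
conditionally independent given `C` with the same pair marginals; it is `0` wherever
`p(z) = 0`, since division by zero gives `0`. -/
def condIndepMass (μ : Measure Ω) (A : Ω → α) (B : Ω → β) (C : Ω → γ)
    (t : α × β × γ) : ℝ :=
  pmass μ (fun ω => (A ω, C ω)) (t.1, t.2.2) * pmass μ (fun ω => (B ω, C ω)) t.2 /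
    pmass μ C t.2.2

variable (μ : Measure Ω) {A : Ω → α} {B : Ω → β} {C : Ω → γ}

lemma condIndepMass_nonneg (t : α × β × γ) : 0 ≤ condIndepMass μ A B C t :=
  div_nonneg (mul_nonneg (pmass_nonneg _ _ _) (pmass_nonneg _ _ _)) (pmass_nonneg _ _ _)

lemma pmass_eq_zero_of_condIndepMass_eq_zero [IsFiniteMeasure μ] {t : α × β × γ}
    (ht : condIndepMass μ A B C t = 0) : pmass μ (fun ω => (A ω, B ω, C ω)) t = 0 := by
  refine le_antisymm ?_ (pmass_nonneg _ _ _)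
  rcases div_eq_zero_iff.1 ht with h | h
  · rcases mul_eq_zero.1 h with h | h
    · exact h ▸ pmass_le_pmass_comp μ (fun t => (t.1, t.2.2)) _ t
    · exact h ▸ pmass_le_pmass_comp μ Prod.snd _ t
  · exact h ▸ pmass_le_pmass_comp μ (fun t => t.2.2) _ t

lemma mul_log_div_condIndepMass [IsFiniteMeasure μ] (t : α × β × γ) :
    pmass μ (fun ω => (A ω, B ω, C ω)) t *
        log (pmass μ (fun ω => (A ω, B ω, C ω)) t / condIndepMass μ A B C t) =
      pmass μ (fun ω => (A ω, B ω, C ω)) t * log (pmass μ (fun ω => (A ω, B ω, C ω)) t) +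
        pmass μ (fun ω => (A ω, B ω, C ω)) t * log (pmass μ C t.2.2) -
        pmass μ (fun ω => (A ω, B ω, C ω)) t *
          log (pmass μ (fun ω => (A ω, C ω)) (t.1, t.2.2)) -
        pmass μ (fun ω => (A ω, B ω, C ω)) t *
          log (pmass μ (fun ω => (B ω, C ω)) t.2) := by
  rcases (pmass_nonneg μ (fun ω => (A ω, B ω, C ω)) t).eq_or_lt with h0 | hp
  · simp [← h0]
  have hAC := hp.trans_le (pmass_le_pmass_comp μ (fun t => (t.1, t.2.2)) _ t)
  have hBC := hp.trans_le (pmass_le_pmass_comp μ Prod.snd _ t)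
  have hC := hp.trans_le (pmass_le_pmass_comp μ (fun t => t.2.2) _ t)
  simp only [Function.comp_def] at hAC hBC hC
  rw [condIndepMass, log_div hp.ne' (div_pos (mul_pos hAC hBC) hC).ne',
    log_div (mul_pos hAC hBC).ne' hC.ne', log_mul hAC.ne' hBC.ne']
  ring

variable [MeasurableSpace α] [MeasurableSingletonClass α] [Fintype α]
  [MeasurableSpace β] [MeasurableSingletonClass β] [Fintype β]
  [MeasurableSpace γ] [MeasurableSingletonClass γ] [Fintype γ] [IsProbabilityMeasure μ]

lemma sum_condIndepMass_le_one (hA : Measurable A) (hB : Measurable B) (hC : Measurable C) :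
    ∑ t, condIndepMass μ A B C t ≤ 1 := by
  calc ∑ t, condIndepMass μ A B C t
        = ∑ s : β × γ,
            pmass μ C s.2 * pmass μ (fun ω => (B ω, C ω)) s / pmass μ C s.2 := by
        rw [Fintype.sum_prod_type, sum_comm]
        refine sum_congr rfl fun s _ => ?_
        simp only [condIndepMass, ← sum_div, ← sum_mul, sum_pmass_pair_left μ hA hC]
    _ ≤ ∑ s : β × γ, pmass μ (fun ω => (B ω, C ω)) s := by
        refine sum_le_sum fun s _ => ?_
        rcases eq_or_ne (pmass μ C s.2) 0 with h | h
        · simp [h, pmass_nonneg]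
        · rw [mul_div_cancel_left₀ _ h]
    _ = 1 := sum_pmass μ (hB.prodMk hC)

lemma cmi_eq_sum_mul_log_div (hA : Measurable A) (hB : Measurable B) (hC : Measurable C) :
    cmi μ A B C = ∑ t, pmass μ (fun ω => (A ω, B ω, C ω)) t *
      log (pmass μ (fun ω => (A ω, B ω, C ω)) t / condIndepMass μ A B C t) := by
  have hABC : Measurable fun ω => (A ω, B ω, C ω) := hA.prodMk (hB.prodMk hC)
  have hAC : ent μ (fun ω => (A ω, C ω)) = -∑ t, pmass μ (fun ω => (A ω, B ω, C ω)) t *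
      log (pmass μ (fun ω => (A ω, C ω)) (t.1, t.2.2)) :=
    ent_comp_eq_neg_sum μ hABC fun t : α × β × γ => (t.1, t.2.2)
  have hBC : ent μ (fun ω => (B ω, C ω)) = -∑ t, pmass μ (fun ω => (A ω, B ω, C ω)) t *
      log (pmass μ (fun ω => (B ω, C ω)) t.2) := ent_comp_eq_neg_sum μ hABC Prod.snd
  have hC' : ent μ C = -∑ t, pmass μ (fun ω => (A ω, B ω, C ω)) t *
      log (pmass μ C t.2.2) := ent_comp_eq_neg_sum μ hABC fun t => t.2.2
  rw [cmi, hAC, hBC, hC', ent_eq_neg_sum]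
  simp only [mul_log_div_condIndepMass, sum_sub_distrib, sum_add_distrib]
  ring

theorem cmi_nonneg (hA : Measurable A) (hB : Measurable B) (hC : Measurable C) :
    0 ≤ cmi μ A B C := by
  rw [cmi_eq_sum_mul_log_div μ hA hB hC]
  exact sum_mul_log_div_nonneg (pmass_nonneg μ _) (condIndepMass_nonneg μ)
    (fun _ => pmass_eq_zero_of_condIndepMass_eq_zero μ) (sum_pmass μ (hA.prodMk (hB.prodMk hC)))
    (sum_condIndepMass_le_one μ hA hB hC)

theorem pmass_mul_pmass_eq_of_cmi_eq_zero (hA : Measurable A) (hB : Measurable B)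
    (hC : Measurable C) (h : cmi μ A B C = 0) (x : α) (y : β) (z : γ) :
    pmass μ (fun ω => (A ω, B ω, C ω)) (x, y, z) * pmass μ C z =
      pmass μ (fun ω => (A ω, C ω)) (x, z) * pmass μ (fun ω => (B ω, C ω)) (y, z) := by
  have hpq := eq_of_sum_mul_log_div_eq_zero (pmass_nonneg μ _) (condIndepMass_nonneg μ)
    (fun _ => pmass_eq_zero_of_condIndepMass_eq_zero μ) (sum_pmass μ (hA.prodMk (hB.prodMk hC)))
    (sum_condIndepMass_le_one μ hA hB hC) ((cmi_eq_sum_mul_log_div μ hA hB hC).symm.trans h)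
  rcases eq_or_ne (pmass μ C z) 0 with hz | hz
  · have hxz : pmass μ (fun ω => (A ω, C ω)) (x, z) = 0 :=
      le_antisymm (hz ▸ pmass_le_pmass_comp μ Prod.snd _ (x, z)) (pmass_nonneg _ _ _)
    simp [hz, hxz]
  · rw [congrFun hpq (x, y, z), condIndepMass, div_mul_cancel₀ _ hz]

end CondMutualInfo

section Independence

variable {ι α : Type*} [Fintype ι] [MeasurableSpace α] [MeasurableSingletonClass α]
  (μ : Measure Ω) [IsProbabilityMeasure μ] {f : ι → Ω → α}

theorem iIndepFun_iff_pmass_eq_prod [Countable α] (hf : ∀ i, Measurable (f i)) :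
    iIndepFun f μ ↔
      ∀ z : ι → α, pmass μ (fun ω i => f i ω) z = ∏ i, pmass μ (f i) (z i) := by
  rw [iIndepFun_iff_map_fun_eq_pi_map fun i => (hf i).aemeasurable, Measure.ext_iff_singleton]
  refine forall_congr' fun z => ?_
  rw [Measure.map_apply (measurable_pi_lambda _ hf) (measurableSet_singleton z),
    Measure.pi_singleton]
  simp only [Measure.map_apply (hf _) (measurableSet_singleton _), pmass]
  rw [← ENNReal.toReal_prod, ENNReal.toReal_eq_toReal_iff' (measure_ne_top _ _)
    (ENNReal.prod_ne_top fun i _ => measure_ne_top _ _)]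

theorem ProbabilityTheory.iIndepFun.ent_pi [DecidableEq ι] [Fintype α] (h : iIndepFun f μ)
    (hf : ∀ i, Measurable (f i)) :
    ent μ (fun ω i => f i ω) = ∑ i, ent μ (f i) := by
  have hF : Measurable fun ω i => f i ω := measurable_pi_lambda _ hf
  have hprod := (iIndepFun_iff_pmass_eq_prod μ hf).1 h
  have hent : ∀ i,
      ent μ (f i) = -∑ z, pmass μ (fun ω i => f i ω) z * log (pmass μ (f i) (z i)) :=
    fun i => ent_comp_eq_neg_sum μ hF fun z => z i
  simp only [hent, sum_neg_distrib, ent_eq_neg_sum, neg_inj]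
  rw [sum_comm]
  refine sum_congr rfl fun z _ => ?_
  rw [← mul_sum]
  rcases eq_or_ne (pmass μ (fun ω i => f i ω) z) 0 with h0 | h0
  · rw [h0, zero_mul, zero_mul]
  · rw [hprod z, log_prod (f := fun i => pmass μ (f i) (z i))
      fun i _ => prod_ne_zero_iff.1 (hprod z ▸ h0) i (mem_univ i)]

end Independence

lemma Finset.exists_lt_eq_insert_insert {ι : Type*} [LinearOrder ι] {b : Finset ι}
    (hb : 1 < b.card) : ∃ i j a, i < j ∧ i ∉ a ∧ j ∉ a ∧ b = insert i (insert j a) := by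
  have key : ∀ i ∈ b, ∀ j ∈ b, i < j →
      ∃ i j a, i < j ∧ i ∉ a ∧ j ∉ a ∧ b = insert i (insert j a) :=
    fun i hi j hj hij => ⟨i, j, (b.erase i).erase j, hij, by simp, by simp,
      by rw [insert_erase (mem_erase.2 ⟨hij.ne', hj⟩), insert_erase hi]⟩
  obtain ⟨x, hx, y, hy, hxy⟩ := one_lt_card.1 hb
  rcases hxy.lt_or_gt with h | h
  exacts [key x hx y hy h, key y hy x hx h]

section Restriction

variable {ι S : Type*} [DecidableEq ι]

lemma injective_restrict_insert (i : ι) (a : Finset ι) :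
    Injective fun g : ↥(insert i a) → S =>
      (g ⟨i, mem_insert_self i a⟩, fun l : ↥a => g ⟨l, mem_insert_of_mem l.2⟩) := by
  intro g g' h
  simp only [Prod.mk.injEq, funext_iff] at h
  funext ⟨l, hl⟩
  rcases mem_insert.1 hl with rfl | hl
  exacts [h.1, h.2 ⟨l, hl⟩]

lemma injective_restrict_insert_insert (i j : ι) (a : Finset ι) :
    Injective fun g : ↥(insert i (insert j a)) → S =>
      (g ⟨i, mem_insert_self i _⟩, g ⟨j, mem_insert_of_mem (mem_insert_self j a)⟩,
        fun l : ↥a => g ⟨l, mem_insert_of_mem (mem_insert_of_mem l.2)⟩) := by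
  intro g g' h
  simp only [Prod.mk.injEq, funext_iff] at h
  funext ⟨l, hl⟩
  rcases mem_insert.1 hl with rfl | hl
  · exact h.1
  rcases mem_insert.1 hl with rfl | hl
  exacts [h.2.1, h.2.2 ⟨l, hl⟩]

end Restriction

lemma pmass_restr_le_of_subset {n : ℕ} {S : Type*} (μ : Measure Ω) [IsFiniteMeasure μ]
    (X : Fin n → Ω → S) {a b : Finset (Fin n)} (hab : a ⊆ b) (y : Fin n → S) :
    pmass μ (restr X b) (fun l => y l) ≤ pmass μ (restr X a) (fun l => y l) :=
  pmass_le_pmass_comp μ (fun (g : ↥b → S) (l : ↥a) => g ⟨l, hab l.2⟩) _ _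

section Subfamilies

variable {n : ℕ} {S : Type*} [MeasurableSpace S] (μ : Measure Ω) {X : Fin n → Ω → S}

lemma measurable_restr (hX : ∀ i, Measurable (X i)) (a : Finset (Fin n)) :
    Measurable (restr X a) :=
  measurable_pi_lambda _ fun l => hX l

lemma ProbabilityTheory.iIndepFun.of_subset {a b : Finset (Fin n)}
    (h : iIndepFun (fun l : ↥b => X l) μ) (hab : a ⊆ b) : iIndepFun (fun l : ↥a => X l) μ :=
  h.precomp (g := fun l : ↥a => ⟨l, hab l.2⟩) fun _ _ hl =>
    Subtype.ext (congrArg (fun l : ↥b => (l : Fin n)) hl :)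

variable [Fintype S] [MeasurableSingletonClass S] [IsProbabilityMeasure μ]

lemma cmi_eq_ent_restr (hX : ∀ i, Measurable (X i)) (i j : Fin n) (a : Finset (Fin n)) :
    cmi μ (X i) (X j) (restr X a) = ent μ (restr X (insert i a)) + ent μ (restr X (insert j a)) -
      ent μ (restr X (insert i (insert j a))) - ent μ (restr X a) := by
  have hi : ent μ (fun ω => (X i ω, restr X a ω)) = ent μ (restr X (insert i a)) :=
    ent_eq_of_injective μ (measurable_restr hX _) (injective_restrict_insert i a) fun _ => rfl
  have hj : ent μ (fun ω => (X j ω, restr X a ω)) = ent μ (restr X (insert j a)) :=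
    ent_eq_of_injective μ (measurable_restr hX _) (injective_restrict_insert j a) fun _ => rfl
  have hij : ent μ (fun ω => (X i ω, X j ω, restr X a ω)) =
      ent μ (restr X (insert i (insert j a))) :=
    ent_eq_of_injective μ (measurable_restr hX _) (injective_restrict_insert_insert i j a)
      fun _ => rfl
  rw [cmi, hi, hj, hij]

lemma ent_restr_of_iIndepFun (hX : ∀ i, Measurable (X i)) {b : Finset (Fin n)}
    (h : iIndepFun (fun l : ↥b => X l) μ) : ent μ (restr X b) = ∑ l ∈ b, ent μ (X l) :=
  (h.ent_pi μ fun l => hX l).trans (sum_coe_sort b fun l => ent μ (X l))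

lemma pmass_restr_of_iIndepFun (hX : ∀ i, Measurable (X i)) {b : Finset (Fin n)}
    (h : iIndepFun (fun l : ↥b => X l) μ) (y : Fin n → S) :
    pmass μ (restr X b) (fun l => y l) = ∏ l ∈ b, pmass μ (X l) (y l) :=
  ((iIndepFun_iff_pmass_eq_prod μ (f := fun l : ↥b => X l) fun l => hX l).1 h _).trans
    (prod_coe_sort b fun l => pmass μ (X l) (y l))

theorem cmi_eq_zero_of_iIndepFun (hX : ∀ i, Measurable (X i)) {i j : Fin n} {a : Finset (Fin n)}
    (hi : i ∉ insert j a) (hj : j ∉ a)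
    (h : iIndepFun (fun l : ↥(insert i (insert j a)) => X l) μ) :
    cmi μ (X i) (X j) (restr X a) = 0 := by
  have hent : ∀ c ⊆ insert i (insert j a), ent μ (restr X c) = ∑ l ∈ c, ent μ (X l) :=
    fun c hc => ent_restr_of_iIndepFun μ hX (h.of_subset μ hc)
  have hia : i ∉ a := fun h' => hi (mem_insert_of_mem h')
  rw [cmi_eq_ent_restr μ hX, hent _ (insert_subset_insert _ (subset_insert _ _)),
    hent _ (subset_insert _ _), hent _ subset_rfl,
    hent _ ((subset_insert _ _).trans (subset_insert _ _)),
    sum_insert hia, sum_insert hj, sum_insert hi, sum_insert hj]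
  ring

lemma pmass_restr_insert_insert_mul_prod (hX : ∀ i, Measurable (X i)) {i j : Fin n}
    {a : Finset (Fin n)} (hi : i ∉ a) (hj : j ∉ a) (hcmi : cmi μ (X i) (X j) (restr X a) = 0)
    (ha : iIndepFun (fun l : ↥a => X l) μ) (hia : iIndepFun (fun l : ↥(insert i a) => X l) μ)
    (hja : iIndepFun (fun l : ↥(insert j a) => X l) μ) (y : Fin n → S) :
    pmass μ (restr X (insert i (insert j a))) (fun l => y l) * ∏ l ∈ a, pmass μ (X l) (y l) =
      (pmass μ (X i) (y i) * ∏ l ∈ a, pmass μ (X l) (y l)) *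
        (pmass μ (X j) (y j) * ∏ l ∈ a, pmass μ (X l) (y l)) := by
  have hyij : pmass μ (fun ω => (X i ω, X j ω, restr X a ω)) (y i, y j, fun l => y l) =
      pmass μ (restr X (insert i (insert j a))) fun l => y l :=
    pmass_eq_of_injective μ (injective_restrict_insert_insert i j a) (restr X _)
      (fun _ => rfl) fun l => y l
  have hyi : pmass μ (fun ω => (X i ω, restr X a ω)) (y i, fun l => y l) =
      pmass μ (restr X (insert i a)) fun l => y l :=
    pmass_eq_of_injective μ (injective_restrict_insert i a) (restr X _) (fun _ => rfl)
      fun l => y l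
  have hyj : pmass μ (fun ω => (X j ω, restr X a ω)) (y j, fun l => y l) =
      pmass μ (restr X (insert j a)) fun l => y l :=
    pmass_eq_of_injective μ (injective_restrict_insert j a) (restr X _) (fun _ => rfl)
      fun l => y l
  have key := pmass_mul_pmass_eq_of_cmi_eq_zero μ (hX i) (hX j) (measurable_restr hX a) hcmi
    (y i) (y j) (fun l => y l)
  rwa [hyij, hyi, hyj, pmass_restr_of_iIndepFun μ hX ha, pmass_restr_of_iIndepFun μ hX hia,
    pmass_restr_of_iIndepFun μ hX hja, prod_insert hi, prod_insert hj] at key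

theorem iIndepFun_insert_insert_of_cmi_eq_zero (hX : ∀ i, Measurable (X i)) {i j : Fin n}
    {a : Finset (Fin n)} (hi : i ∉ insert j a) (hj : j ∉ a)
    (hcmi : cmi μ (X i) (X j) (restr X a) = 0) (ha : iIndepFun (fun l : ↥a => X l) μ)
    (hia : iIndepFun (fun l : ↥(insert i a) => X l) μ)
    (hja : iIndepFun (fun l : ↥(insert j a) => X l) μ) :
    iIndepFun (fun l : ↥(insert i (insert j a)) => X l) μ := by
  rw [iIndepFun_iff_pmass_eq_prod μ (f := fun l : ↥(insert i (insert j a)) => X l) fun l => hX l]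
  intro z
  let y : Fin n → S := fun l =>
    if hl : l ∈ insert i (insert j a) then z ⟨l, hl⟩ else z ⟨i, mem_insert_self _ _⟩
  have hz : z = fun l : ↥(insert i (insert j a)) => y l :=
    funext fun l => by simp only [y, dif_pos l.2]
  rw [hz, prod_coe_sort (insert i (insert j a)) fun l => pmass μ (X l) (y l),
    prod_insert hi, prod_insert hj]
  change pmass μ (restr X (insert i (insert j a))) (fun l => y l) = _
  rcases eq_or_ne (∏ l ∈ a, pmass μ (X l) (y l)) 0 with h0 | h0
  · have hle := pmass_restr_le_of_subset μ X ((subset_insert j a).trans (subset_insert i _)) y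
    rw [pmass_restr_of_iIndepFun μ hX ha y, h0] at hle
    rw [h0, mul_zero, mul_zero]
    exact le_antisymm hle (pmass_nonneg _ _ _)
  · refine mul_right_cancel₀ h0 ?_
    linear_combination pmass_restr_insert_insert_mul_prod μ hX
      (fun h => hi (mem_insert_of_mem h)) hj hcmi ha hia hja y

end Subfamilies

section Vanishing

variable {n : ℕ} {S : Type*} [Fintype S] [MeasurableSpace S] [MeasurableSingletonClass S]
  (μ : Measure Ω) [IsProbabilityMeasure μ] {X : Fin n → Ω → S}

theorem iIndepFun_of_cmi_eq_zero (hX : ∀ i, Measurable (X i)) (k : ℕ)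
    (hcmi : ∀ i j a, i < j → i ∉ a → j ∉ a → a.card + 2 ≤ k →
      cmi μ (X i) (X j) (restr X a) = 0)
    (b : Finset (Fin n)) (hb : b.card ≤ k) : iIndepFun (fun l : ↥b => X l) μ := by
  induction b using Finset.strongInduction with
  | H b ih =>
  rcases le_or_gt b.card 1 with hb1 | hb1
  · have := card_le_one_iff_subsingleton_coe.1 hb1
    exact iIndepFun.of_subsingleton
  obtain ⟨i, j, a, hij, hia, hja, rfl⟩ := exists_lt_eq_insert_insert hb1
  have hi : i ∉ insert j a := by simp [hij.ne, hia]
  have hcard : (insert i (insert j a)).card = a.card + 2 := by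
    rw [card_insert_of_notMem hi, card_insert_of_notMem hja]
  have hsub : ∀ c ⊂ insert i (insert j a), c.card ≤ k := fun c hc =>
    (card_le_card hc.subset).trans hb
  have hjia : j ∉ insert i a := by simp [hij.ne', hja]
  have ha : a ⊂ insert i (insert j a) := (ssubset_insert hja).trans_subset (subset_insert _ _)
  have hia' : insert i a ⊂ insert i (insert j a) := by
    rw [insert_comm]; exact ssubset_insert hjia
  have hja' : insert j a ⊂ insert i (insert j a) := ssubset_insert hi
  exact iIndepFun_insert_insert_of_cmi_eq_zero μ hX hi hja
    (hcmi i j a hij hia hja (hcard ▸ hb)) (ih a ha (hsub a ha)) (ih _ hia' (hsub _ hia'))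
    (ih _ hja' (hsub _ hja'))

theorem uI_eq_zero_iff (hX : ∀ i, Measurable (X i)) {m : ℕ} (hm : 1 ≤ m) :
    uI μ X m = 0 ↔
      ∀ i j a, i < j → i ∉ a → j ∉ a → a.card + 1 = m →
        cmi μ (X i) (X j) (restr X a) = 0 := by
  have hmem : ∀ i j a,
      a ∈ (univ \ {i, j}).powerset.filter (fun a : Finset (Fin n) => a.card = m - 1) ↔
        i ∉ a ∧ j ∉ a ∧ a.card + 1 = m := by
    intro i j a
    simp only [mem_filter, mem_powerset, subset_sdiff, subset_univ, disjoint_insert_right,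
      disjoint_singleton_right, true_and, and_assoc]
    rw [show a.card = m - 1 ↔ a.card + 1 = m by omega]
  rw [uI, mul_eq_zero, sum_eq_zero_iff_of_nonneg fun p _ => sum_nonneg fun a _ =>
    cmi_nonneg μ (hX _) (hX _) (measurable_restr hX a)]
  constructor
  · rintro (hc | hsum) i j a hij hi hj ha
    · have hcard : (insert i (insert j a)).card = m + 1 := by
        rw [card_insert_of_notMem (by simp [hij.ne, hi]), card_insert_of_notMem hj, ← ha]
      have hmn : m + 1 ≤ n :=
        hcard ▸ (card_le_univ (insert i (insert j a))).trans_eq (Fintype.card_fin n)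
      simp only [inv_eq_zero, mul_eq_zero, Nat.cast_eq_zero, Nat.choose_eq_zero_iff] at hc
      omega
    · exact (sum_eq_zero_iff_of_nonneg fun a _ =>
        cmi_nonneg μ (hX _) (hX _) (measurable_restr hX a)).1
          (hsum (i, j) (mem_filter.2 ⟨mem_univ _, hij⟩)) a ((hmem i j a).2 ⟨hi, hj, ha⟩)
  · intro h
    refine Or.inr fun p hp => sum_eq_zero fun a ha => ?_
    obtain ⟨hi, hj, ha⟩ := (hmem p.1 p.2 a).1 ha
    exact h p.1 p.2 a (mem_filter.1 hp).2 hi hj ha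

end Vanishing

theorem u_vanish_iff_indep_general {Ω S : Type*} [MeasurableSpace Ω]
    [Fintype S] [MeasurableSpace S] [MeasurableSingletonClass S]
    {n : ℕ} (μ : Measure Ω) [IsProbabilityMeasure μ]
    (X : Fin n → Ω → S) (hX : ∀ i, Measurable (X i))
    (k : ℕ) :
    (∀ j, 1 ≤ j → j < k → uI μ X j = 0) ↔
      (∀ a : Finset (Fin n), a.card ≤ k →
        ProbabilityTheory.iIndepFun (m := fun _ : ↥a => (inferInstance : MeasurableSpace S))
          (fun i : ↥a => X i.1) μ) := by
  constructor
  · intro hu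
    refine iIndepFun_of_cmi_eq_zero μ hX k fun i j a hij hi hj ha => ?_
    exact (uI_eq_zero_iff μ hX (Nat.le_add_left 1 _)).1 (hu _ le_add_self (by omega))
      i j a hij hi hj rfl
  · intro hind m hm hmk
    refine (uI_eq_zero_iff μ hX hm).2 fun i j a hij hi hj ha => ?_
    refine cmi_eq_zero_of_iIndepFun μ hX (by simp [hij.ne, hi]) hj (hind _ ?_)
    have := card_insert_le i (insert j a)
    have := card_insert_le j a
    omega

/-- For `2 ≤ k ≤ n`: `u_j(X) = 0` for all `1 ≤ j < k` if and only if,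
for every subset `a ⊆ {1,…,n}` with `|a| ≤ k`, the variables `(X_i)_{i ∈ a}` are
jointly independent. -/
theorem u_vanish_iff_indep {Ω S : Type*} [MeasurableSpace Ω]
    [Fintype S] [MeasurableSpace S] [MeasurableSingletonClass S]
    {n : ℕ} (hn : 2 ≤ n) (μ : Measure Ω) [IsProbabilityMeasure μ]
    (X : Fin n → Ω → S) (hX : ∀ i, Measurable (X i))
    (k : ℕ) (hk1 : 2 ≤ k) (hk2 : k ≤ n) :
    (∀ j, 1 ≤ j → j < k → uI μ X j = 0) ↔
      (∀ a : Finset (Fin n), a.card ≤ k →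
        ProbabilityTheory.iIndepFun (m := fun _ : ↥a => (inferInstance : MeasurableSpace S))
          (fun i : ↥a => X i.1) μ) :=
  u_vanish_iff_indep_general μ X hX k
end
end

section
/- Let B_n be the set of non-constant monotone Boolean functions f : P({1,…,n}) → {0,1}, let X_1,…,X_n and Y be finite-valued random variables, and suppose I_∂ : B_n → ℝ satisfies the PID consistency equations: for every a ⊆ {1,…,n}, I(X^a ; Y) = Σ_{f ∈ B_n, f(a)=1} I_∂(f). Then for any two disjoint subsets a, b ⊆ {1,…,n}: I(X^a ; Y | X^b) = Σ_{f ∈ B_n, f(a∪b)=1 and f(b)=0} I_∂(f). -/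
open MeasureTheory Finset

noncomputable section

variable {Ω : Type*} [MeasurableSpace Ω]

/-- A Boolean function on the powerset of `{1,…,n}` is monotone if `a ⊆ b` implies
`f a ≤ f b` (with `false < true`). -/
def monoBF {n : ℕ} (f : Finset (Fin n) → Bool) : Prop :=
  ∀ a b : Finset (Fin n), a ⊆ b → f a ≤ f b

instance {n : ℕ} (f : Finset (Fin n) → Bool) : Decidable (monoBF f) := by
  unfold monoBF; infer_instance

set_option maxHeartbeats 4000000

lemma ent_comp_inj {α β : Type*} [Fintype α] [Fintype β] (μ : Measure Ω)
    (Z : Ω → α) {g : α → β} (hg : Function.Injective g) :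
    ent μ (fun ω => g (Z ω)) = ent μ Z := by
  classical
  unfold ent
  have hzero : ∀ w ∈ (univ : Finset β), w ∉ univ.image g →
      Real.negMulLog ((μ ((fun ω => g (Z ω)) ⁻¹' {w})).toReal) = 0 := by
    intro w _ hw
    have : (fun ω => g (Z ω)) ⁻¹' {w} = ∅ := by
      ext ω
      simp only [Set.mem_preimage, Set.mem_singleton_iff, Set.mem_empty_iff_false,
        iff_false]
      intro h
      exact hw (Finset.mem_image.mpr ⟨Z ω, Finset.mem_univ _, h⟩)
    simp [this]
  rw [← Finset.sum_subset (Finset.subset_univ (univ.image g)) hzero,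
    Finset.sum_image (fun x _ y _ h => hg h)]
  refine Finset.sum_congr rfl fun z _ => ?_
  have hpre : (fun ω => g (Z ω)) ⁻¹' {g z} = Z ⁻¹' {z} := by
    ext ω; simp [hg.eq_iff]
  rw [hpre]

/-- If the atoms `I_∂ f` (indexed by non-constant monotone Boolean
functions) satisfy the PID consistency equations
`I(X^a ; Y) = ∑_{f(a) = 1} I_∂ f` for every `a`, then for disjoint `a, b`:
`I(X^a ; Y | X^b) = ∑_{f(a∪b) = 1, f(b) = 0} I_∂ f`. -/
theorem pid_cmi_atoms {Ω S T : Type*} [MeasurableSpace Ω]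
    [Fintype S] [MeasurableSpace S] [MeasurableSingletonClass S]
    [Fintype T] [MeasurableSpace T] [MeasurableSingletonClass T]
    {n : ℕ} (μ : Measure Ω) [IsProbabilityMeasure μ]
    (X : Fin n → Ω → S) (hX : ∀ i, Measurable (X i))
    (Y : Ω → T) (hY : Measurable Y)
    (Ipd : (Finset (Fin n) → Bool) → ℝ)
    (hcons : ∀ a : Finset (Fin n),
      mi μ (restr X a) Y =
        ∑ f ∈ univ.filter (fun f : Finset (Fin n) → Bool =>
            monoBF f ∧ (∃ s t, f s ≠ f t) ∧ f a = true), Ipd f)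
    (a b : Finset (Fin n)) (hab : Disjoint a b) :
    cmi μ (restr X a) Y (restr X b) =
      ∑ f ∈ univ.filter (fun f : Finset (Fin n) → Bool =>
          monoBF f ∧ (∃ s t, f s ≠ f t) ∧ f (a ∪ b) = true ∧ f b = false), Ipd f := by
  classical
  -- entropy identities via injective recodings
  have e1 : ent μ (fun ω => (restr X a ω, restr X b ω)) = ent μ (restr X (a ∪ b)) := by
    have hg : Function.Injective
        (fun h : ((a ∪ b : Finset (Fin n)) → S) =>
          ((fun i : a => h ⟨i.1, Finset.mem_union_left _ i.2⟩),
           (fun i : b => h ⟨i.1, Finset.mem_union_right _ i.2⟩))) := by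
      intro h1 h2 he
      funext i
      rcases Finset.mem_union.mp i.2 with hi | hi
      · exact congrFun (congrArg Prod.fst he) ⟨i.1, hi⟩
      · exact congrFun (congrArg Prod.snd he) ⟨i.1, hi⟩
    exact ent_comp_inj μ (restr X (a ∪ b)) hg
  have e2 : ent μ (fun ω => (Y ω, restr X b ω)) =
      ent μ (fun ω => (restr X b ω, Y ω)) := by
    have hg : Function.Injective
        (fun p : ({x // x ∈ b} → S) × T => (p.2, p.1)) := fun p q h =>
      Prod.ext (congrArg Prod.snd h) (congrArg Prod.fst h)
    exact ent_comp_inj (g := fun p : ({x // x ∈ b} → S) × T => (p.2, p.1)) μ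
      (fun ω => (restr X b ω, Y ω)) hg
  have e3 : ent μ (fun ω => (restr X a ω, Y ω, restr X b ω)) =
      ent μ (fun ω => (restr X (a ∪ b) ω, Y ω)) := by
    have hg : Function.Injective
        (fun p : ((a ∪ b : Finset (Fin n)) → S) × T =>
          ((fun i : a => p.1 ⟨i.1, Finset.mem_union_left _ i.2⟩), p.2,
           (fun i : b => p.1 ⟨i.1, Finset.mem_union_right _ i.2⟩))) := by
      intro p q he
      have h2 : p.2 = q.2 := congrArg (fun x => x.2.1) he
      have hfa := congrArg Prod.fst he
      have hfb := congrArg (fun x => x.2.2) he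
      refine Prod.ext ?_ h2
      funext i
      rcases Finset.mem_union.mp i.2 with hi | hi
      · exact congrFun hfa ⟨i.1, hi⟩
      · exact congrFun hfb ⟨i.1, hi⟩
    exact ent_comp_inj μ (fun ω => (restr X (a ∪ b) ω, Y ω)) hg
  have key : cmi μ (restr X a) Y (restr X b) =
      mi μ (restr X (a ∪ b)) Y - mi μ (restr X b) Y := by
    unfold cmi mi
    rw [e1, e2, e3]
    ring
  -- combinatorial identity
  have hmono : ∀ f : Finset (Fin n) → Bool, monoBF f → f b = true → f (a ∪ b) = true := by
    intro f hf hb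
    have h := hf b (a ∪ b) Finset.subset_union_right
    rw [hb] at h
    exact le_antisymm (Bool.le_true _) h
  set A := univ.filter (fun f : Finset (Fin n) → Bool =>
      monoBF f ∧ (∃ s t, f s ≠ f t) ∧ f (a ∪ b) = true) with hA
  have hsplit : ∑ f ∈ A.filter (fun f => f b = true), Ipd f
      + ∑ f ∈ A.filter (fun f => ¬ f b = true), Ipd f = ∑ f ∈ A, Ipd f :=
    Finset.sum_filter_add_sum_filter_not A _ _
  have hB : A.filter (fun f => f b = true) =
      univ.filter (fun f : Finset (Fin n) → Bool =>
        monoBF f ∧ (∃ s t, f s ≠ f t) ∧ f b = true) := by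
    ext f
    simp only [hA, Finset.mem_filter, Finset.mem_univ, true_and]
    constructor
    · rintro ⟨⟨h1, h2, _⟩, h4⟩; exact ⟨h1, h2, h4⟩
    · rintro ⟨h1, h2, h3⟩; exact ⟨⟨h1, h2, hmono f h1 h3⟩, h3⟩
  have hC : A.filter (fun f => ¬ f b = true) =
      univ.filter (fun f : Finset (Fin n) → Bool =>
        monoBF f ∧ (∃ s t, f s ≠ f t) ∧ f (a ∪ b) = true ∧ f b = false) := by
    ext f
    simp only [hA, Finset.mem_filter, Finset.mem_univ, true_and, Bool.not_eq_true]
    tauto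
  rw [key, hcons (a ∪ b), hcons b, ← hA, ← hB, ← hC, ← hsplit]
  ring
end
end
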